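/- Let Ω ⊆ ℝ³ be open, let f, g : Ω → ℝ be twice continuously differentiable with f > 0 and g > 0 on Ω, set α := ∇f/f and β := ∇g/g, and let h₀ : Ω → ℝ be twice differentiable. Define v := ∇h₀ − h₀·α − h₀·star(β). Then for every x ∈ Ω: Sc( Dv(x) − α(x)·star(v(x)) − β(x)·v(x) ) = −Δh₀(x) + ( Δf(x)/f(x) − Δg(x)/g(x) + 2·(∇g/g)(x)·( (∇g/g)(x) − (∇f/f)(x) ) )·h₀(x), where · between gradients denotes the Euclidean dot product on ℝ³. -/

import Mathlib

open MeasureTheory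

noncomputable section

/-- The quaternion unit `i`. -/
def qi : Quaternion ℝ := ⟨0, 1, 0, 0⟩
/-- The quaternion unit `j`. -/
def qj : Quaternion ℝ := ⟨0, 0, 1, 0⟩
/-- The quaternion unit `k`. -/
def qk : Quaternion ℝ := ⟨0, 0, 0, 1⟩

/-- Partial derivative of a quaternion-valued function on `ℝ³`. -/
def pd (i : Fin 3) (w : (Fin 3 → ℝ) → Quaternion ℝ) (x : Fin 3 → ℝ) : Quaternion ℝ :=
  fderiv ℝ w x (Pi.single i 1)

/-- Partial derivative of a real-valued function on `ℝ³`. -/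
def pdR (i : Fin 3) (u : (Fin 3 → ℝ) → ℝ) (x : Fin 3 → ℝ) : ℝ :=
  fderiv ℝ u x (Pi.single i 1)

/-- Moisil–Teodorescu operator `Dw = i ∂₁ w + j ∂₂ w + k ∂₃ w`. -/
def Dq (w : (Fin 3 → ℝ) → Quaternion ℝ) (x : Fin 3 → ℝ) : Quaternion ℝ :=
  qi * pd 0 w x + qj * pd 1 w x + qk * pd 2 w x

/-- Gradient of a real-valued function, viewed as a pure quaternion. -/
def gradq (u : (Fin 3 → ℝ) → ℝ) (x : Fin 3 → ℝ) : Quaternion ℝ :=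
  ⟨0, pdR 0 u x, pdR 1 u x, pdR 2 u x⟩

/-- Laplacian of a real-valued function on `ℝ³`. -/
def lapl (u : (Fin 3 → ℝ) → ℝ) (x : Fin 3 → ℝ) : ℝ :=
  pdR 0 (pdR 0 u) x + pdR 1 (pdR 1 u) x + pdR 2 (pdR 2 u) x

/-- Vector (non-scalar) part of a quaternion. -/
def Vecq (q : Quaternion ℝ) : Quaternion ℝ := q - (q.re : Quaternion ℝ)

/-- Divergence of the vector part of a quaternion-valued function. -/
def divVec (α : (Fin 3 → ℝ) → Quaternion ℝ) (x : Fin 3 → ℝ) : ℝ :=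
  pdR 0 (fun y => (α y).imI) x + pdR 1 (fun y => (α y).imJ) x + pdR 2 (fun y => (α y).imK) x

/-!
Since `α = ∇f/f` and `β = ∇g/g` are pure quaternions, `star β = -β`, so `v = ∇h₀ - h₀ α + h₀ β`
is pure with components `vⱼ = ∂ⱼh₀ - h₀ ∂ⱼf/f + h₀ ∂ⱼg/g`. For a pure field `Sc (Dv) = -div v`,
and for pure `a, b` one has `Sc (a * star b) = a·b` and `Sc (a * b) = -a·b`; so the left side is
`-div v - α·v + β·v`. Expanding `div v` with `∂ⱼ(∂ⱼf/f) = ∂ⱼ²f/f - (∂ⱼf/f)²`, the terms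
containing `∇h₀` cancel and what is left is `-Δh₀` plus the stated potential times `h₀`.
-/

section PartialDerivatives

variable {x : Fin 3 → ℝ} {u v : (Fin 3 → ℝ) → ℝ}

lemma pdR_add (i : Fin 3) (hu : DifferentiableAt ℝ u x) (hv : DifferentiableAt ℝ v x) :
    pdR i (fun y => u y + v y) x = pdR i u x + pdR i v x := by
  simp [pdR, fderiv_fun_add hu hv]

lemma pdR_sub (i : Fin 3) (hu : DifferentiableAt ℝ u x) (hv : DifferentiableAt ℝ v x) :
    pdR i (fun y => u y - v y) x = pdR i u x - pdR i v x := by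
  simp [pdR, fderiv_fun_sub hu hv]

lemma pdR_mul (i : Fin 3) (hu : DifferentiableAt ℝ u x) (hv : DifferentiableAt ℝ v x) :
    pdR i (fun y => u y * v y) x = pdR i u x * v x + u x * pdR i v x := by
  simp only [pdR, fderiv_fun_mul hu hv, add_apply, smul_apply, smul_eq_mul]
  ring

lemma pdR_inv (i : Fin 3) (hv : DifferentiableAt ℝ v x) (hvx : v x ≠ 0) :
    pdR i (fun y => (v y)⁻¹) x = -pdR i v x / v x ^ 2 := by
  rw [pdR, show (fun y => (v y)⁻¹) = Inv.inv ∘ v from rfl,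
    fderiv_comp x (differentiableAt_inv hvx) hv]
  simp [fderiv_inv, pdR, div_eq_mul_inv]

lemma pdR_div (i : Fin 3) (hu : DifferentiableAt ℝ u x) (hv : DifferentiableAt ℝ v x)
    (hvx : v x ≠ 0) :
    pdR i (fun y => u y / v y) x = (pdR i u x * v x - u x * pdR i v x) / v x ^ 2 := by
  simp only [div_eq_mul_inv (u _)]
  rw [pdR_mul (v := fun y => (v y)⁻¹) i hu (hv.inv hvx), pdR_inv i hv hvx]
  field_simp
  ring

lemma differentiableAt_pdR (i : Fin 3) (hu : DifferentiableAt ℝ (fderiv ℝ u) x) :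
    DifferentiableAt ℝ (pdR i u) x :=
  hu.clm_apply (differentiableAt_const _)

lemma differentiableAt_pdR_of_contDiffAt (i : Fin 3) (hu : ContDiffAt ℝ 2 u x) :
    DifferentiableAt ℝ (pdR i u) x :=
  differentiableAt_pdR i ((hu.fderiv_right (m := 1) le_rfl).differentiableAt one_ne_zero)

lemma pdR_mul_pdR_div (i j : Fin 3) (hu : DifferentiableAt ℝ u x)
    (hv : DifferentiableAt ℝ v x) (hv' : DifferentiableAt ℝ (pdR j v) x) (hvx : v x ≠ 0) :
    pdR i (fun y => u y * (pdR j v y / v y)) x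
      = pdR i u x * (pdR j v x / v x)
        + u x * ((pdR i (pdR j v) x * v x - pdR j v x * pdR i v x) / v x ^ 2) := by
  have hq : DifferentiableAt ℝ (fun y => pdR j v y / v y) x := by
    fun_prop (disch := exact hvx)
  rw [pdR_mul i hu hq, pdR_div i hv' hv hvx]

end PartialDerivatives

section PureQuaternions

variable {x : Fin 3 → ℝ}

@[simp] lemma gradq_re (u : (Fin 3 → ℝ) → ℝ) : (gradq u x).re = 0 := rfl
@[simp] lemma gradq_imI (u : (Fin 3 → ℝ) → ℝ) : (gradq u x).imI = pdR 0 u x := rfl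
@[simp] lemma gradq_imJ (u : (Fin 3 → ℝ) → ℝ) : (gradq u x).imJ = pdR 1 u x := rfl
@[simp] lemma gradq_imK (u : (Fin 3 → ℝ) → ℝ) : (gradq u x).imK = pdR 2 u x := rfl

variable (a b c : ℝ)

@[simp] lemma re_smul_qi_add : (a • qi + b • qj + c • qk).re = 0 := by
  show a * 0 + b * 0 + c * 0 = 0
  ring

@[simp] lemma imI_smul_qi_add : (a • qi + b • qj + c • qk).imI = a := by
  show a * 1 + b * 0 + c * 0 = a
  ring

@[simp] lemma imJ_smul_qi_add : (a • qi + b • qj + c • qk).imJ = b := by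
  show a * 0 + b * 1 + c * 0 = b
  ring

@[simp] lemma imK_smul_qi_add : (a • qi + b • qj + c • qk).imK = c := by
  show a * 0 + b * 0 + c * 1 = c
  ring

end PureQuaternions

section MoisilTeodorescu

variable {x : Fin 3 → ℝ} {w : (Fin 3 → ℝ) → Quaternion ℝ}

lemma pdR_comp_clm (L : Quaternion ℝ →L[ℝ] ℝ) (i : Fin 3) (hw : DifferentiableAt ℝ w x) :
    pdR i (fun y => L (w y)) x = L (pd i w x) := by
  simp [pdR, pd, fderiv_fun_comp x L.differentiableAt hw]

lemma re_Dq (hw : DifferentiableAt ℝ w x) : (Dq w x).re = -divVec w x := by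
  have hI : pdR 0 (fun y => (w y).imI) x = (pd 0 w x).imI :=
    pdR_comp_clm (LinearMap.toContinuousLinearMap (QuaternionAlgebra.imIₗ _ _ _)) 0 hw
  have hJ : pdR 1 (fun y => (w y).imJ) x = (pd 1 w x).imJ :=
    pdR_comp_clm (LinearMap.toContinuousLinearMap (QuaternionAlgebra.imJₗ _ _ _)) 1 hw
  have hK : pdR 2 (fun y => (w y).imK) x = (pd 2 w x).imK :=
    pdR_comp_clm (LinearMap.toContinuousLinearMap (QuaternionAlgebra.imKₗ _ _ _)) 2 hw
  simp only [Dq, divVec, hI, hJ, hK, Quaternion.re_add, Quaternion.re_mul]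
  simp only [qi, qj, qk, zero_mul, one_mul, zero_sub, sub_zero, sub_self, neg_add_rev]
  ring

lemma divVec_smul_qi_add (a b c : (Fin 3 → ℝ) → ℝ) :
    divVec (fun y => a y • qi + b y • qj + c y • qk) x
      = pdR 0 a x + pdR 1 b x + pdR 2 c x := by
  simp only [divVec, imI_smul_qi_add, imJ_smul_qi_add, imK_smul_qi_add]

end MoisilTeodorescu

section FactorizedField

variable {x : Fin 3 → ℝ} {h f g : (Fin 3 → ℝ) → ℝ}

def vComp (h f g : (Fin 3 → ℝ) → ℝ) (j : Fin 3) (y : Fin 3 → ℝ) : ℝ :=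
  pdR j h y - h y * (pdR j f y / f y) + h y * (pdR j g y / g y)

lemma gradq_sub_smul_sub_smul_star_eq (h f g : (Fin 3 → ℝ) → ℝ) :
    (fun y => gradq h y - h y • ((f y)⁻¹ • gradq f y) - h y • star ((g y)⁻¹ • gradq g y))
      = fun y => vComp h f g 0 y • qi + vComp h f g 1 y • qj + vComp h f g 2 y • qk := by
  funext y
  ext <;>
    simp only [re_smul_qi_add, imI_smul_qi_add, imJ_smul_qi_add, imK_smul_qi_add, vComp,
      Quaternion.re_sub, Quaternion.imI_sub, Quaternion.imJ_sub, Quaternion.imK_sub,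
      Quaternion.re_smul, Quaternion.imI_smul, Quaternion.imJ_smul, Quaternion.imK_smul,
      Quaternion.re_star, Quaternion.imI_star, Quaternion.imJ_star, Quaternion.imK_star,
      gradq_re, gradq_imI, gradq_imJ, gradq_imK, smul_eq_mul] <;>
    ring

lemma differentiableAt_vComp (j : Fin 3) (hh : DifferentiableAt ℝ h x)
    (hh' : DifferentiableAt ℝ (pdR j h) x) (hf : DifferentiableAt ℝ f x)
    (hf' : DifferentiableAt ℝ (pdR j f) x) (hfx : f x ≠ 0) (hg : DifferentiableAt ℝ g x)
    (hg' : DifferentiableAt ℝ (pdR j g) x) (hgx : g x ≠ 0) :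
    DifferentiableAt ℝ (vComp h f g j) x := by
  unfold vComp
  fun_prop (disch := assumption)

lemma pdR_vComp (i j : Fin 3) (hh : DifferentiableAt ℝ h x)
    (hh' : DifferentiableAt ℝ (pdR j h) x) (hf : DifferentiableAt ℝ f x)
    (hf' : DifferentiableAt ℝ (pdR j f) x) (hfx : f x ≠ 0) (hg : DifferentiableAt ℝ g x)
    (hg' : DifferentiableAt ℝ (pdR j g) x) (hgx : g x ≠ 0) :
    pdR i (vComp h f g j) x = pdR i (pdR j h) x
      - (pdR i h x * (pdR j f x / f x)
        + h x * ((pdR i (pdR j f) x * f x - pdR j f x * pdR i f x) / f x ^ 2))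
      + (pdR i h x * (pdR j g x / g x)
        + h x * ((pdR i (pdR j g) x * g x - pdR j g x * pdR i g x) / g x ^ 2)) := by
  have hF : DifferentiableAt ℝ (fun y => h y * (pdR j f y / f y)) x := by
    fun_prop (disch := assumption)
  have hG : DifferentiableAt ℝ (fun y => h y * (pdR j g y / g y)) x := by
    fun_prop (disch := assumption)
  unfold vComp
  rw [pdR_add i (hh'.fun_sub hF) hG, pdR_sub i hh' hF,
    pdR_mul_pdR_div i j hh hf hf' hfx, pdR_mul_pdR_div i j hh hg hg' hgx]

end FactorizedField

/-- for `α = ∇f/f`, `β = ∇g/g`, the factorized Schrödinger operator takes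
the form `−Δ + Δf/f − Δg/g + 2 (∇g/g)·((∇g/g) − (∇f/f))`. -/
theorem factorization_gradlog (Ω : Set (Fin 3 → ℝ)) (hΩ : IsOpen Ω)
    (f g : (Fin 3 → ℝ) → ℝ)
    (hf : ContDiffOn ℝ 2 f Ω) (hg : ContDiffOn ℝ 2 g Ω)
    (hfpos : ∀ x ∈ Ω, 0 < f x) (hgpos : ∀ x ∈ Ω, 0 < g x)
    (h₀ : (Fin 3 → ℝ) → ℝ)
    (hh₀ : ∀ x ∈ Ω, DifferentiableAt ℝ h₀ x)
    (hh₀' : ∀ x ∈ Ω, DifferentiableAt ℝ (fderiv ℝ h₀) x) :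
    ∀ x ∈ Ω,
      (Dq (fun y => gradq h₀ y - h₀ y • ((f y)⁻¹ • gradq f y)
            - h₀ y • star ((g y)⁻¹ • gradq g y)) x
          - ((f x)⁻¹ • gradq f x) *
              star (gradq h₀ x - h₀ x • ((f x)⁻¹ • gradq f x)
                - h₀ x • star ((g x)⁻¹ • gradq g x))
          - ((g x)⁻¹ • gradq g x) *
              (gradq h₀ x - h₀ x • ((f x)⁻¹ • gradq f x)
                - h₀ x • star ((g x)⁻¹ • gradq g x))).re =
        -lapl h₀ x +
          (lapl f x / f x - lapl g x / g x
            + 2 * ∑ i : Fin 3,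
                (pdR i g x / g x) * (pdR i g x / g x - pdR i f x / f x)) * h₀ x := by
  intro x hx
  have hf₂ : ContDiffAt ℝ 2 f x := hf.contDiffAt (hΩ.mem_nhds hx)
  have hg₂ : ContDiffAt ℝ 2 g x := hg.contDiffAt (hΩ.mem_nhds hx)
  have hf₁ : DifferentiableAt ℝ f x := hf₂.differentiableAt two_ne_zero
  have hg₁ : DifferentiableAt ℝ g x := hg₂.differentiableAt two_ne_zero
  have hfx : f x ≠ 0 := (hfpos x hx).ne'
  have hgx : g x ≠ 0 := (hgpos x hx).ne'
  have hh' (j : Fin 3) := differentiableAt_pdR j (hh₀' x hx)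
  have hf' (j : Fin 3) := differentiableAt_pdR_of_contDiffAt j hf₂
  have hg' (j : Fin 3) := differentiableAt_pdR_of_contDiffAt j hg₂
  have hdiff (j : Fin 3) :=
    differentiableAt_vComp j (hh₀ x hx) (hh' j) hf₁ (hf' j) hfx hg₁ (hg' j) hgx
  have hpdR (j : Fin 3) := pdR_vComp j j (hh₀ x hx) (hh' j) hf₁ (hf' j) hfx hg₁ (hg' j) hgx
  rw [gradq_sub_smul_sub_smul_star_eq, Quaternion.re_sub, Quaternion.re_sub,
    re_Dq (by fun_prop), divVec_smul_qi_add, hpdR 0, hpdR 1, hpdR 2]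
  simp only [Quaternion.re_mul, lapl, Fin.sum_univ_three,
    Quaternion.re_sub, Quaternion.imI_sub, Quaternion.imJ_sub, Quaternion.imK_sub,
    Quaternion.re_smul, Quaternion.imI_smul, Quaternion.imJ_smul, Quaternion.imK_smul,
    Quaternion.re_star, Quaternion.imI_star, Quaternion.imJ_star, Quaternion.imK_star,
    gradq_re, gradq_imI, gradq_imJ, gradq_imK, smul_eq_mul]
  field_simp
  ring

end
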